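/- Let A, B, C be 2×2 Hermitian complex matrices with A² = B² = C² = I that pairwise anticommute (AB = −BA, CA = −AC, CB = −BC). For complex numbers α, β, the 8×8 matrix R = α·A⊗A⊗C + β·B⊗B⊗C is unitary if and only if |α|² + |β|² = 1 and α·conj(β) + conj(α)·β = 0. -/

import Mathlib

open Matrix Kronecker

lemma kron_negl {l m n p : Type*} (A : Matrix l m ℂ) (B : Matrix n p ℂ) :
    (-A) ⊗ₖ B = -(A ⊗ₖ B) := by
  ext i j; simp [kroneckerMap_apply]

lemma kron_negr {l m n p : Type*} (A : Matrix l m ℂ) (B : Matrix n p ℂ) :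
    A ⊗ₖ (-B) = -(A ⊗ₖ B) := by
  ext i j; simp [kroneckerMap_apply]

lemma kron_conjT {m n : Type*} (A : Matrix m m ℂ) (B : Matrix n n ℂ) :
    (A ⊗ₖ B)ᴴ = Aᴴ ⊗ₖ Bᴴ := by
  ext i j
  simp [conjTranspose_apply, kroneckerMap_apply, mul_comm]

lemma normc_sq (z : ℂ) : ((‖z‖ : ℂ)) ^ 2 = star z * z := by
  have h : ((‖z‖ : ℂ)) ^ 2 = ((Complex.normSq z : ℝ) : ℂ) := by
    rw [Complex.normSq_eq_norm_sq]
    push_cast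
    ring
  rw [h, Complex.normSq_eq_conj_mul_self]
  rfl

/-- For 2×2 Hermitian matrices with `A² = B² = C² = I` and pairwise
anticommuting, the matrix `R = α A⊗A⊗C + β B⊗B⊗C` is unitary iff
`|α|² + |β|² = 1` and `α conj(β) + conj(α) β = 0`. -/
theorem stmt_16 (A B C : Matrix (Fin 2) (Fin 2) ℂ)
    (hAh : Aᴴ = A) (hBh : Bᴴ = B) (hCh : Cᴴ = C)
    (hA : A * A = 1) (hB : B * B = 1) (hC : C * C = 1)
    (hAB : A * B = -(B * A)) (hCA : C * A = -(A * C)) (hCB : C * B = -(B * C))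
    (α β : ℂ) :
    (α • (A ⊗ₖ (A ⊗ₖ C)) + β • (B ⊗ₖ (B ⊗ₖ C)))ᴴ *
        (α • (A ⊗ₖ (A ⊗ₖ C)) + β • (B ⊗ₖ (B ⊗ₖ C))) = 1 ↔
      ‖α‖ ^ 2 + ‖β‖ ^ 2 = 1 ∧ α * star β + star α * β = 0 := by
  set P := A ⊗ₖ (A ⊗ₖ C) with hP
  set Q := B ⊗ₖ (B ⊗ₖ C) with hQ
  set M := (A * B) ⊗ₖ ((A * B) ⊗ₖ (1 : Matrix (Fin 2) (Fin 2) ℂ)) with hM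
  have hBA : B * A = -(A * B) := by rw [hAB, neg_neg]
  have hPh : Pᴴ = P := by rw [hP, kron_conjT, kron_conjT, hAh, hCh]
  have hQh : Qᴴ = Q := by rw [hQ, kron_conjT, kron_conjT, hBh, hCh]
  have hPP : P * P = 1 := by
    rw [hP, ← mul_kronecker_mul, ← mul_kronecker_mul, hA, hC, one_kronecker_one,
      one_kronecker_one]
  have hQQ : Q * Q = 1 := by
    rw [hQ, ← mul_kronecker_mul, ← mul_kronecker_mul, hB, hC, one_kronecker_one,
      one_kronecker_one]
  have hPQ : P * Q = M := by
    rw [hP, hQ, hM, ← mul_kronecker_mul, ← mul_kronecker_mul, hC]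
  have hQP : Q * P = M := by
    rw [hQ, hP, hM, ← mul_kronecker_mul, ← mul_kronecker_mul, hC, hBA,
      kron_negl, kron_negl, kron_negr, neg_neg]
  have hMM : M * M = 1 := by
    have h2 : (A * B) * (A * B) = -1 := by
      calc (A * B) * (A * B) = A * (B * A) * B := by noncomm_ring
        _ = -(A * A * (B * B)) := by rw [hBA]; noncomm_ring
        _ = -1 := by rw [hA, hB, mul_one]
    rw [hM, ← mul_kronecker_mul, ← mul_kronecker_mul, mul_one, h2,
      kron_negl, kron_negl, kron_negr, neg_neg, one_kronecker_one,
      one_kronecker_one]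
  have htrM : M.trace = 0 := by
    have h0 : (A * B).trace = 0 := by
      have t1 := Matrix.trace_mul_comm A B
      rw [hAB, trace_neg] at t1
      rw [hAB, trace_neg, neg_eq_zero]
      linear_combination -t1/2
    rw [hM, trace_kronecker, h0, zero_mul]
  have key : (α • P + β • Q)ᴴ * (α • P + β • Q)
      = (star α * α + star β * β) • (1 : Matrix (Fin 2 × (Fin 2 × Fin 2)) (Fin 2 × (Fin 2 × Fin 2)) ℂ)
        + (star α * β + star β * α) • M := by
    rw [conjTranspose_add, conjTranspose_smul, conjTranspose_smul, hPh, hQh]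
    rw [add_mul, mul_add, mul_add, smul_mul_assoc, smul_mul_assoc, smul_mul_assoc,
      smul_mul_assoc, mul_smul_comm, mul_smul_comm, mul_smul_comm, mul_smul_comm,
      hPP, hQQ, hPQ, hQP]
    rw [add_smul, add_smul]
    module
  rw [key]
  constructor
  · intro h
    have htr := congrArg Matrix.trace h
    simp only [trace_add, trace_smul, htrM, smul_zero, add_zero, trace_one] at htr
    have hs : star α * α + star β * β = 1 := by
      rw [smul_eq_mul] at htr
      norm_num at htr
      exact htr
    have ht : star α * β + star β * α = 0 := by
      by_contra hne
      rw [hs, one_smul] at h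
      have hM0 : M = 0 := by
        have h' := add_eq_left.mp h
        exact (smul_eq_zero.mp h').resolve_left hne
      rw [hM0, mul_zero] at hMM
      have h8 := congrArg Matrix.trace hMM
      simp [trace_one] at h8
    refine ⟨?_, by linear_combination ht⟩
    have hcast : ((‖α‖ ^ 2 + ‖β‖ ^ 2 : ℝ) : ℂ) = 1 := by
      push_cast
      rw [normc_sq α, normc_sq β]
      exact hs
    exact_mod_cast hcast
  · rintro ⟨h1, h2⟩
    have hs : star α * α + star β * β = 1 := by
      have h1' : ((‖α‖ ^ 2 + ‖β‖ ^ 2 : ℝ) : ℂ) = 1 := by exact_mod_cast h1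
      push_cast at h1'
      rw [normc_sq α, normc_sq β] at h1'
      exact h1'
    have ht : star α * β + star β * α = 0 := by linear_combination h2
    rw [hs, ht, one_smul, zero_smul, add_zero]
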